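/- arXiv:2408.02029 — 3 statements merged into one kernel-verified Lean document; each statement's English description precedes it below -/
import Mathlib

section
/- Let p = ⟨A₀, ℓ₀, …, ℓ_{n−1}, A_n⟩ and p′ = ⟨A₀′, ℓ₀′, …, ℓ_{n−1}′, A_n′⟩ be simple path patterns of the same length n in a property graph G with ℓ_i′ = ℓ_i for all 0 ≤ i ≤ n−1 and A_i ⊆ A_i′ for all 0 ≤ i ≤ n. Then V(p′) ⊆ V(p); consequently, for any positive integer θ, if p is infrequent (|V(p)| < θ), then p′ is also infrequent (|V(p′)| < θ). -/
/-- A property graph: directed edges labeled by `L`, vertices carrying attribute sets over `Att`. -/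
structure PropertyGraph (V L Att : Type) where
  E : Set (V × L × V)
  attr : V → Set Att

/-- A simple path pattern of length `n`: `n+1` nonempty attribute sets and `n` edge labels. -/
structure PathPattern (L Att : Type) (n : ℕ) where
  A : Fin (n + 1) → Set Att
  A_nonempty : ∀ i, (A i).Nonempty
  lab : Fin n → L

namespace PropertyGraph

variable {V L Att : Type}

/-- Vertex `s` matches pattern `p` if it is the source of a path matching `p`. -/
def Matches (G : PropertyGraph V L Att) {n : ℕ} (p : PathPattern L Att n) (s : V) : Prop :=
  ∃ v : Fin (n + 1) → V,
    v 0 = s ∧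
    (∀ i : Fin n, (v i.castSucc, p.lab i, v i.succ) ∈ G.E) ∧
    (∀ i : Fin (n + 1), p.A i ⊆ G.attr (v i))

/-- `V(p)`: the set of vertices matching pattern `p`. -/
def Vmatch (G : PropertyGraph V L Att) {n : ℕ} (p : PathPattern L Att n) : Set V :=
  {s | G.Matches p s}

/-- `E(A, ℓ)`: edges with label `l` whose target's attribute set covers `S`. -/
def edgesTo (G : PropertyGraph V L Att) (S : Set Att) (l : L) : Set (V × L × V) :=
  {e ∈ G.E | e.2.1 = l ∧ S ⊆ G.attr e.2.2}

/-- `V(A, ℓ)`: vertices whose attribute set covers `S` having an outgoing `l`-labeled edge. -/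
def srcVerts (G : PropertyGraph V L Att) (S : Set Att) (l : L) : Set V :=
  {v | S ⊆ G.attr v ∧ ∃ w, (v, l, w) ∈ G.E}

/-- In-degree of a vertex `w`. -/
noncomputable def inDeg (G : PropertyGraph V L Att) (w : V) : ℕ :=
  {e ∈ G.E | e.2.2 = w}.ncard

/-- `d_m`: the maximum in-degree over all vertices. -/
noncomputable def maxInDeg (G : PropertyGraph V L Att) [Fintype V] : ℕ :=
  Finset.univ.sup fun w => G.inDeg w

/-- Vertex `s` matches the reachability path pattern `⟨A₀, l*, A₁⟩`. -/
def ReachMatches (G : PropertyGraph V L Att) (A₀ A₁ : Set Att) (l : L) (s : V) : Prop :=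
  ∃ n : ℕ, 1 ≤ n ∧ ∃ v : Fin (n + 1) → V,
    v 0 = s ∧
    (∀ i : Fin n, (v i.castSucc, l, v i.succ) ∈ G.E) ∧
    A₀ ⊆ G.attr s ∧ A₁ ⊆ G.attr (v (Fin.last n))

/-- The set of vertices matching the reachability path pattern `⟨A₀, l*, A₁⟩`. -/
def VreachMatch (G : PropertyGraph V L Att) (A₀ A₁ : Set Att) (l : L) : Set V :=
  {s | G.ReachMatches A₀ A₁ l s}

end PropertyGraph

namespace PropertyGraph

variable {V L Att : Type} (G : PropertyGraph V L Att) {n : ℕ} {p p' : PathPattern L Att n}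

theorem Matches.of_lab_eq_of_A_subset (hlab : ∀ i, p'.lab i = p.lab i)
    (hA : ∀ i, p.A i ⊆ p'.A i) {s : V} (h : G.Matches p' s) : G.Matches p s := by
  obtain ⟨v, hv0, hedge, hattr⟩ := h
  exact ⟨v, hv0, fun i => hlab i ▸ hedge i, fun i => (hA i).trans (hattr i)⟩

theorem Vmatch_subset_of_lab_eq_of_A_subset (hlab : ∀ i, p'.lab i = p.lab i)
    (hA : ∀ i, p.A i ⊆ p'.A i) : G.Vmatch p' ⊆ G.Vmatch p :=
  fun _ => Matches.of_lab_eq_of_A_subset G hlab hA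

end PropertyGraph

open PropertyGraph in
/-- Same-length patterns with equal labels and pointwise larger attribute sets
match fewer vertices (V(p') ⊆ V(p)); hence infrequency of p propagates to p'. -/
theorem attr_superset_antimonotone {V L Att : Type} [Fintype V] (G : PropertyGraph V L Att)
    {n : ℕ} (p p' : PathPattern L Att n)
    (hlab : ∀ i : Fin n, p'.lab i = p.lab i)
    (hA : ∀ i : Fin (n + 1), p.A i ⊆ p'.A i) :
    G.Vmatch p' ⊆ G.Vmatch p ∧
      ∀ θ : ℕ, 0 < θ → (G.Vmatch p).ncard < θ → (G.Vmatch p').ncard < θ := by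
  have hsub := G.Vmatch_subset_of_lab_eq_of_A_subset hlab hA
  exact ⟨hsub, fun θ _ hθ => (Set.ncard_le_ncard hsub (Set.toFinite _)).trans_lt hθ⟩
end

section
/- Let G be a finite property graph, let i ≥ 1, let ℓ be an edge label, and let A be a nonempty attribute set. For every simple path pattern p of length i whose last label ℓ_{i−1} equals ℓ and whose last attribute set A_i equals A, the number of vertices matching p satisfies |V(p)| ≤ |E(A, ℓ)| · d_m^{i−1}, where d_m is the maximum in-degree in G. -/
/-!
Peel off the first edge of a matching path: a vertex matching `⟨A₀, ℓ₀, A₁, …⟩` is the source of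
an `ℓ₀`-edge into a vertex matching the tail `⟨A₁, ℓ₁, …⟩`, and that edge determines the vertex.
Hence `|V(p)|` is at most the number of edges into `V(tail p)`, which is at most
`|V(tail p)| · d_m`. After `i - 1` such steps the pattern is the single edge `⟨A_{i-1}, ℓ, A⟩`,
whose matching vertices are sources of edges of `E(A, ℓ)`.
-/

namespace PathPattern

variable {L Att : Type}

def tail {n : ℕ} (p : PathPattern L Att (n + 1)) : PathPattern L Att n where
  A j := p.A j.succ
  A_nonempty j := p.A_nonempty j.succ
  lab j := p.lab j.succ

end PathPattern

namespace PropertyGraph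

variable {V L Att : Type} {G : PropertyGraph V L Att}

theorem inDeg_le_maxInDeg [Fintype V] (w : V) : G.inDeg w ≤ G.maxInDeg :=
  Finset.le_sup (Finset.mem_univ w)

theorem ncard_edges_into_le [Fintype V] [Finite L] (T : Set V) :
    {e ∈ G.E | e.2.2 ∈ T}.ncard ≤ T.ncard * G.maxInDeg := by
  classical
  have hunion : {e ∈ G.E | e.2.2 ∈ T} = ⋃ w ∈ T.toFinset, {e ∈ G.E | e.2.2 = w} := by
    ext e
    simp
  calc {e ∈ G.E | e.2.2 ∈ T}.ncard
      ≤ ∑ w ∈ T.toFinset, G.inDeg w := hunion ▸ T.toFinset.set_ncard_biUnion_le _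
    _ ≤ T.toFinset.card • G.maxInDeg :=
        Finset.sum_le_card_nsmul _ _ _ fun w _ => inDeg_le_maxInDeg w
    _ = T.ncard * G.maxInDeg := by rw [smul_eq_mul, Set.ncard_eq_toFinset_card']

theorem Matches.exists_edge_to_tail {n : ℕ} {p : PathPattern L Att (n + 1)} {s : V}
    (h : G.Matches p s) : ∃ w, (s, p.lab 0, w) ∈ G.E ∧ G.Matches p.tail w := by
  obtain ⟨v, rfl, hE, hA⟩ := h
  refine ⟨v 1, hE 0, fun j => v j.succ, rfl, fun j => ?_, fun j => hA j.succ⟩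
  show (v j.castSucc.succ, p.lab j.succ, v j.succ.succ) ∈ G.E
  simpa only [Fin.succ_castSucc] using hE j.succ

theorem Vmatch_subset_image_fst_edges_into_Vmatch_tail {n : ℕ} (p : PathPattern L Att (n + 1)) :
    G.Vmatch p ⊆ Prod.fst '' {e ∈ G.E | e.2.2 ∈ G.Vmatch p.tail} := by
  intro s hs
  obtain ⟨w, hE, hw⟩ := hs.exists_edge_to_tail
  exact ⟨(s, p.lab 0, w), ⟨hE, hw⟩, rfl⟩

theorem Vmatch_subset_image_fst_edgesTo (p : PathPattern L Att 1) :
    G.Vmatch p ⊆ Prod.fst '' G.edgesTo (p.A 1) (p.lab 0) := by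
  rintro s ⟨v, rfl, hE, hA⟩
  exact ⟨(v 0, p.lab 0, v 1), ⟨hE 0, rfl, hA 1⟩, rfl⟩

theorem ncard_Vmatch_le [Fintype V] [Finite L] :
    ∀ {n : ℕ} (p : PathPattern L Att (n + 1)), (G.Vmatch p).ncard ≤
      (G.edgesTo (p.A (Fin.last (n + 1))) (p.lab (Fin.last n))).ncard * G.maxInDeg ^ n
  | 0, p => by
    simpa using Set.ncard_le_ncard (Vmatch_subset_image_fst_edgesTo p) |>.trans
      (Set.ncard_image_le (Set.toFinite _))
  | n + 1, p =>
    calc (G.Vmatch p).ncard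
        ≤ {e ∈ G.E | e.2.2 ∈ G.Vmatch p.tail}.ncard :=
          (Set.ncard_le_ncard (Vmatch_subset_image_fst_edges_into_Vmatch_tail p)).trans
            (Set.ncard_image_le (Set.toFinite _))
      _ ≤ (G.Vmatch p.tail).ncard * G.maxInDeg := ncard_edges_into_le _
      _ ≤ (G.edgesTo (p.A (Fin.last (n + 2))) (p.lab (Fin.last (n + 1)))).ncard
            * G.maxInDeg ^ n * G.maxInDeg := Nat.mul_le_mul_right _ (ncard_Vmatch_le p.tail)
      _ = _ := by rw [mul_assoc, ← pow_succ]

end PropertyGraph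

open PropertyGraph in
/-- For a length-i pattern ending with ⟨ℓ, A⟩,
|V(p)| ≤ |E(A,ℓ)| · d_m^(i−1). -/
theorem bound_by_edgesTo {V L Att : Type} [Fintype V] [Fintype L] (G : PropertyGraph V L Att)
    {i : ℕ} (hi : 1 ≤ i) (l : L) (S : Set Att)
    (p : PathPattern L Att i)
    (hlast_lab : p.lab ⟨i - 1, by omega⟩ = l)
    (hlast_A : p.A (Fin.last i) = S) :
    (G.Vmatch p).ncard ≤ (G.edgesTo S l).ncard * G.maxInDeg ^ (i - 1) := by
  obtain ⟨n, rfl⟩ : ∃ n, i = n + 1 := ⟨i - 1, by omega⟩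
  subst hlast_lab hlast_A
  exact ncard_Vmatch_le p
end

section
/- Let p_X, p_Y, p_X′, p_Y′ be simple path patterns in a property graph G such that p_X′ dominates p_X and p_Y′ dominates p_Y. Then V(p_X′) ∩ V(p_Y′) ⊆ V(p_X) ∩ V(p_Y); consequently the absolute support of path association rules is anti-monotone under dominance: ASupp(p_X′ ⇒ p_Y′) ≤ ASupp(p_X ⇒ p_Y), and for any positive integer θ, if ASupp(p_X ⇒ p_Y) < θ then ASupp(p_X′ ⇒ p_Y′) < θ. -/
namespace PropertyGraph

variable {V L Att : Type} (G : PropertyGraph V L Att)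

/-- The prefix of length `m` of a path matching `p'` is a path matching `p`. -/
theorem vmatch_subset_of_dominates {m n : ℕ} (h : m ≤ n)
    {p : PathPattern L Att m} {p' : PathPattern L Att n}
    (hlab : ∀ i : Fin m, p.lab i = p'.lab (Fin.castLE h i))
    (hA : ∀ i : Fin (m + 1), p.A i ⊆ p'.A (Fin.castLE (Nat.succ_le_succ h) i)) :
    G.Vmatch p' ⊆ G.Vmatch p := by
  rintro s ⟨v, hv0, hE, hAttr⟩
  refine ⟨v ∘ Fin.castLE (Nat.succ_le_succ h), hv0, fun i => ?_, fun i => (hA i).trans (hAttr _)⟩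
  have hprefix : Fin.castLE (Nat.succ_le_succ h) i.castSucc = (Fin.castLE h i).castSucc ∧
      Fin.castLE (Nat.succ_le_succ h) i.succ = (Fin.castLE h i).succ := ⟨rfl, rfl⟩
  simpa only [Function.comp_apply, hprefix, hlab i] using hE (Fin.castLE h i)

end PropertyGraph

open PropertyGraph in
/-- If p_X' dominates p_X and p_Y' dominates p_Y, then
V(p_X') ∩ V(p_Y') ⊆ V(p_X) ∩ V(p_Y); hence the absolute support of path association rules
is anti-monotone under dominance. -/
theorem rule_support_antimonotone {V L Att : Type} [Fintype V] (G : PropertyGraph V L Att)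
    {mX nX mY nY : ℕ} (hX : mX ≤ nX) (hY : mY ≤ nY)
    (pX : PathPattern L Att mX) (pX' : PathPattern L Att nX)
    (pY : PathPattern L Att mY) (pY' : PathPattern L Att nY)
    (hlabX : ∀ i : Fin mX, pX.lab i = pX'.lab (Fin.castLE hX i))
    (hAX : ∀ i : Fin (mX + 1), pX.A i ⊆ pX'.A (Fin.castLE (Nat.succ_le_succ hX) i))
    (hlabY : ∀ i : Fin mY, pY.lab i = pY'.lab (Fin.castLE hY i))
    (hAY : ∀ i : Fin (mY + 1), pY.A i ⊆ pY'.A (Fin.castLE (Nat.succ_le_succ hY) i)) :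
    (G.Vmatch pX' ∩ G.Vmatch pY') ⊆ (G.Vmatch pX ∩ G.Vmatch pY) ∧
    (G.Vmatch pX' ∩ G.Vmatch pY').ncard ≤ (G.Vmatch pX ∩ G.Vmatch pY).ncard ∧
    ∀ θ : ℕ, 0 < θ → (G.Vmatch pX ∩ G.Vmatch pY).ncard < θ →
      (G.Vmatch pX' ∩ G.Vmatch pY').ncard < θ := by
  have hsub : G.Vmatch pX' ∩ G.Vmatch pY' ⊆ G.Vmatch pX ∩ G.Vmatch pY :=
    Set.inter_subset_inter (G.vmatch_subset_of_dominates hX hlabX hAX)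
      (G.vmatch_subset_of_dominates hY hlabY hAY)
  have hcard := Set.ncard_le_ncard hsub
  exact ⟨hsub, hcard, fun θ _ hθ => hcard.trans_lt hθ⟩
end
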